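/- Let X be a CAT(0) cube complex and let F be a convex subcomplex. If F is parallel to some convex subcomplex F' ≠ F, then there is a cubical isometric embedding F × [0, a] → X with a ≥ 1 whose restriction to F × {0} is the inclusion of F; in particular F is contained in a combinatorial hyperplane. Hence every convex subcomplex is either unique in its parallelism class or contained in a combinatorial hyperplane. -/
import Mathlib


/-- A combinatorial model of a CAT(0) cube complex: its `0`--skeleton is a
median graph, encoded by its wallspace (hyperplanes and halfspaces), with
the graph metric on the `1`--skeleton equal to the wall-counting metric. -/
structure CubeComplex where
  /-- vertices (`0`--cubes) -/
  V : Type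
  /-- hyperplanes (walls) -/
  Wall : Type
  /-- halfspace membership: `side w x` means `x` is on the positive side of `w` -/
  side : Wall → V → Prop
  /-- graph metric on the `1`--skeleton -/
  d : V → V → ℕ
  sepFinite : ∀ x y : V, {w : Wall | ¬ (side w x ↔ side w y)}.Finite
  d_eq : ∀ x y : V, d x y = {w : Wall | ¬ (side w x ↔ side w y)}.ncard
  /-- every hyperplane is dual to some `1`--cube -/
  wall_dual : ∀ w : Wall, ∃ x y : V, d x y = 1 ∧ ¬ (side w x ↔ side w y)
  /-- the median operation of the underlying median graph -/
  median : V → V → V → V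
  median_xy : ∀ x y z, d x (median x y z) + d (median x y z) y = d x y
  median_yz : ∀ x y z, d y (median x y z) + d (median x y z) z = d y z
  median_xz : ∀ x y z, d x (median x y z) + d (median x y z) z = d x z

namespace CubeComplex

variable (X : CubeComplex)

/-- the hyperplane `w` separates `x` from `y` -/
def Sep (w : X.Wall) (x y : X.V) : Prop := ¬ (X.side w x ↔ X.side w y)

/-- the hyperplane `w` separates `x` from the set `K` -/
def SepFrom (w : X.Wall) (x : X.V) (K : Set X.V) : Prop := ∀ k ∈ K, X.Sep w x k

/-- `z` lies on a geodesic from `x` to `y` -/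
def Btw (x z y : X.V) : Prop := X.d x z + X.d z y = X.d x y

/-- a convex (interval-closed, equivalently geodesically convex) subset -/
def IsConvex (K : Set X.V) : Prop := ∀ a ∈ K, ∀ b ∈ K, ∀ z, X.Btw a z b → z ∈ K

/-- the hyperplane `w` crosses the set `K` -/
def Crosses (w : X.Wall) (K : Set X.V) : Prop := ∃ a ∈ K, ∃ b ∈ K, X.Sep w a b

/-- two subcomplexes are parallel if exactly the same hyperplanes cross them -/
def ParallelSet (K K' : Set X.V) : Prop := ∀ w : X.Wall, X.Crosses w K ↔ X.Crosses w K'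

/-- the vertex set of the carrier `N(w)` of the hyperplane `w` -/
def carrier (w : X.Wall) : Set X.V := {x | ∃ y, X.d x y = 1 ∧ X.Sep w x y}

end CubeComplex

section PropHelpers

lemma iff_of_not_iff_of_not_iff {A B C : Prop} (h1 : ¬ (A ↔ B)) (h2 : ¬ (A ↔ C)) : B ↔ C := by
  tauto

lemma iff_of_not_iff_of_not_iff' {A B C : Prop} (h1 : ¬ (A ↔ C)) (h2 : ¬ (B ↔ C)) : A ↔ B := by
  tauto

end PropHelpers

namespace CubeComplex

variable (X : CubeComplex)

def sepSet (x y : X.V) : Set X.Wall := {w | X.Sep w x y}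

lemma sepSet_finite (x y : X.V) : (X.sepSet x y).Finite := X.sepFinite x y

lemma d_eq' (x y : X.V) : X.d x y = (X.sepSet x y).ncard := X.d_eq x y

lemma sepSet_comm (x y : X.V) : X.sepSet x y = X.sepSet y x := by
  ext w; simp only [sepSet, Sep, Set.mem_setOf_eq]; tauto

lemma d_comm (x y : X.V) : X.d x y = X.d y x := by
  rw [d_eq', d_eq', sepSet_comm]

lemma d_self (x : X.V) : X.d x x = 0 := by
  rw [d_eq']
  convert Set.ncard_empty X.Wall
  ext w; simp [sepSet, Sep]

lemma sepSet_tri (x m y : X.V) :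
    X.sepSet x y = (X.sepSet x m ∪ X.sepSet m y) \ (X.sepSet x m ∩ X.sepSet m y) := by
  ext w
  simp only [sepSet, Sep, Set.mem_setOf_eq, Set.mem_diff, Set.mem_union, Set.mem_inter_iff]
  tauto

lemma btw_iff (x m y : X.V) :
    X.Btw x m y ↔ X.sepSet x m ∩ X.sepSet m y = ∅ := by
  have hfxm := X.sepSet_finite x m
  have hfmy := X.sepSet_finite m y
  have hsub : X.sepSet x m ∩ X.sepSet m y ⊆ X.sepSet x m ∪ X.sepSet m y :=
    fun w hw => Or.inl hw.1
  have hfun : (X.sepSet x m ∪ X.sepSet m y).Finite := hfxm.union hfmy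
  have hfin : (X.sepSet x m ∩ X.sepSet m y).Finite := hfun.subset hsub
  have hsum := Set.ncard_union_add_ncard_inter (X.sepSet x m) (X.sepSet m y) hfxm hfmy
  have hdiff : (X.sepSet x y).ncard =
      (X.sepSet x m ∪ X.sepSet m y).ncard - (X.sepSet x m ∩ X.sepSet m y).ncard := by
    rw [X.sepSet_tri x m y]
    exact Set.ncard_diff hsub hfin
  have hle := Set.ncard_le_ncard hsub hfun
  constructor
  · intro h
    have h' : X.d x m + X.d m y = X.d x y := h
    rw [d_eq', d_eq', d_eq'] at h'
    have : (X.sepSet x m ∩ X.sepSet m y).ncard = 0 := by omega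
    exact (Set.ncard_eq_zero hfin).mp this
  · intro h
    have h0 : (X.sepSet x m ∩ X.sepSet m y).ncard = 0 := by rw [h]; simp
    show X.d x m + X.d m y = X.d x y
    rw [d_eq', d_eq', d_eq']
    omega

lemma btw_disj {x m y : X.V} (h : X.Btw x m y) {w : X.Wall}
    (h1 : w ∈ X.sepSet x m) (h2 : w ∈ X.sepSet m y) : False := by
  have he := (X.btw_iff x m y).mp h
  have : w ∈ (∅ : Set X.Wall) := he ▸ (Set.mem_inter h1 h2)
  simp at this

lemma btw_side {x m y : X.V} (h : X.Btw x m y) (w : X.Wall)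
    (hxy : X.side w x ↔ X.side w y) : X.side w m ↔ X.side w x := by
  by_contra hc
  refine X.btw_disj h (w := w) ?_ ?_ <;>
    · simp only [sepSet, Sep, Set.mem_setOf_eq]; tauto

lemma btw_sub_left {x m y : X.V} (h : X.Btw x m y) : X.sepSet x m ⊆ X.sepSet x y := by
  intro w hw
  by_contra hc
  apply X.btw_disj h hw
  simp only [sepSet, Sep, Set.mem_setOf_eq] at *
  tauto

lemma btw_sub_right {x m y : X.V} (h : X.Btw x m y) : X.sepSet m y ⊆ X.sepSet x y := by
  intro w hw
  by_contra hc
  apply X.btw_disj h (w := w) ?_ hw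
  simp only [sepSet, Sep, Set.mem_setOf_eq] at *
  tauto

lemma sepSet_sub_union (x m y : X.V) : X.sepSet x y ⊆ X.sepSet x m ∪ X.sepSet m y := by
  intro w hw
  simp only [sepSet, Sep, Set.mem_setOf_eq, Set.mem_union] at *
  tauto

lemma btw_trans1 {x z m y : X.V} (h1 : X.Btw x z m) (h2 : X.Btw x m y) : X.Btw x z y := by
  rw [btw_iff, Set.eq_empty_iff_forall_notMem]
  rintro w ⟨ha, hb⟩
  rcases X.sepSet_sub_union z m y hb with hb' | hb'
  · exact X.btw_disj h1 ha hb'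
  · exact X.btw_disj h2 (X.btw_sub_left h1 ha) hb'

lemma btw_concat {a b c y : X.V} (h1 : X.Btw a b y) (h2 : X.Btw b c y) :
    X.Btw a b c ∧ X.Btw a c y := by
  constructor
  · rw [btw_iff, Set.eq_empty_iff_forall_notMem]
    rintro w ⟨ha, hb⟩
    exact X.btw_disj h1 ha (X.btw_sub_left h2 hb)
  · rw [btw_iff, Set.eq_empty_iff_forall_notMem]
    rintro w ⟨ha, hb⟩
    have hb' : w ∈ X.sepSet b y := X.btw_sub_right h2 hb
    rcases X.sepSet_sub_union a b c ha with ha' | ha'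
    · exact X.btw_disj h1 ha' hb'
    · exact X.btw_disj h2 ha' hb

lemma median_btw_xy (x y z : X.V) : X.Btw x (X.median x y z) y := X.median_xy x y z
lemma median_btw_yz (x y z : X.V) : X.Btw y (X.median x y z) z := X.median_yz x y z
lemma median_btw_xz (x y z : X.V) : X.Btw x (X.median x y z) z := X.median_xz x y z

lemma median_side (x y z : X.V) (w : X.Wall) :
    ((X.side w x ↔ X.side w y) → (X.side w (X.median x y z) ↔ X.side w x)) ∧
    ((X.side w y ↔ X.side w z) → (X.side w (X.median x y z) ↔ X.side w y)) ∧
    ((X.side w x ↔ X.side w z) → (X.side w (X.median x y z) ↔ X.side w x)) :=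
  ⟨fun h => X.btw_side (X.median_btw_xy x y z) w h,
   fun h => X.btw_side (X.median_btw_yz x y z) w h,
   fun h => X.btw_side (X.median_btw_xz x y z) w h⟩

lemma btw_self (x y : X.V) : X.Btw x x y := by
  show X.d x x + X.d x y = X.d x y
  rw [X.d_self]; omega

lemma btw_self' (x y : X.V) : X.Btw x y y := by
  show X.d x y + X.d y y = X.d x y
  rw [X.d_self]; omega


lemma two_medians_side {x y u v : X.V} (w' : X.Wall) (huv : X.side w' u ↔ X.side w' v) :
    X.side w' (X.median x y u) ↔ X.side w' (X.median x y v) := by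
  obtain ⟨a1, a2, a3⟩ := X.median_side x y u w'
  obtain ⟨b1, b2, b3⟩ := X.median_side x y v w'
  rcases Classical.em (X.side w' x ↔ X.side w' y) with hxy | hxy
  · exact (a1 hxy).trans (b1 hxy).symm
  · rcases Classical.em (X.side w' x ↔ X.side w' u) with hxu | hxu
    · exact (a3 hxu).trans (b3 (hxu.trans huv)).symm
    · have hyu : X.side w' y ↔ X.side w' u := by
        clear a1 a2 a3 b1 b2 b3 huv
        tauto
      exact (a2 hyu).trans (b2 (hyu.trans huv)).symm

lemma d_pos_iff (x y : X.V) : 1 ≤ X.d x y ↔ (X.sepSet x y).Nonempty := by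
  rw [d_eq']
  exact Set.ncard_pos (X.sepSet_finite x y)

lemma exists_step_aux : ∀ n : ℕ, ∀ x y : X.V, X.d x y ≤ n → 1 ≤ X.d x y →
    ∃ z, X.d x z = 1 ∧ X.Btw x z y := by
  intro n
  induction n with
  | zero => intro x y h1 h2; omega
  | succ n IH =>
    intro x y h1 h2
    obtain ⟨w, hw⟩ := (X.d_pos_iff x y).mp h2
    have hwxy : ¬ (X.side w x ↔ X.side w y) := hw
    obtain ⟨u0, v0, huv0, hsep0⟩ := X.wall_dual w
    obtain ⟨u, v, huv, hsuv, hux⟩ :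
        ∃ u v, X.d u v = 1 ∧ ¬ (X.side w u ↔ X.side w v) ∧ (X.side w u ↔ X.side w x) := by
      by_cases hc : X.side w u0 ↔ X.side w x
      · exact ⟨u0, v0, huv0, hsep0, hc⟩
      · exact ⟨v0, u0, by rw [X.d_comm]; exact huv0, fun h => hsep0 h.symm, by tauto⟩
    set m := X.median x y u with hm
    set m' := X.median x y v with hm'
    have hmx : X.side w m ↔ X.side w x :=
      X.btw_side (X.median_btw_xz x y u) w hux.symm
    have hm'y : X.side w m' ↔ X.side w y := by
      have := X.btw_side (X.median_btw_yz x y v) w (show X.side w y ↔ X.side w v by tauto)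
      tauto
    have hmy : w ∈ X.sepSet m y := by
      simp only [sepSet, Sep, Set.mem_setOf_eq]; tauto
    have hbmy : X.Btw x m y := X.median_btw_xy x y u
    have hdm_lt : X.d x m < X.d x y := by
      have h' : X.d x m + X.d m y = X.d x y := hbmy
      have : 1 ≤ X.d m y := (X.d_pos_iff m y).mpr ⟨w, hmy⟩
      omega
    by_cases h0 : X.d x m = 0
    · -- z = m'
      have hsxm : X.sepSet x m = ∅ := by
        have := h0
        rw [d_eq'] at this
        exact (Set.ncard_eq_zero (X.sepSet_finite x m)).mp this
      have hsuvw : X.sepSet u v = {w} := by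
        have h1' : (X.sepSet u v).ncard = 1 := by rw [← d_eq']; exact huv
        obtain ⟨a, ha⟩ := Set.ncard_eq_one.mp h1'
        have : w ∈ X.sepSet u v := hsuv
        rw [ha] at this ⊢
        simp at this
        rw [this]
      have hsubmm' : X.sepSet m m' ⊆ X.sepSet u v := by
        intro w' hw'
        by_contra hc
        simp only [sepSet, Sep, Set.mem_setOf_eq, not_not] at hw' hc
        exact hw' (X.two_medians_side w' hc)
      have hsxm' : X.sepSet x m' = {w} := by
        apply Set.Subset.antisymm
        · intro w' hw'
          rcases X.sepSet_sub_union x m m' hw' with h | h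
          · rw [hsxm] at h; simp at h
          · rw [← hsuvw]; exact hsubmm' h
        · intro w' hw'
          simp only [Set.mem_singleton_iff] at hw'
          subst hw'
          simp only [sepSet, Sep, Set.mem_setOf_eq]
          tauto
      refine ⟨m', ?_, X.median_btw_xy x y v⟩
      rw [d_eq', hsxm']
      simp
    · have IH' := IH x m (by omega) (by omega)
      obtain ⟨z, hz1, hz2⟩ := IH'
      exact ⟨z, hz1, X.btw_trans1 hz2 hbmy⟩

lemma exists_step (x y : X.V) (h : 1 ≤ X.d x y) : ∃ z, X.d x z = 1 ∧ X.Btw x z y :=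
  X.exists_step_aux (X.d x y) x y le_rfl h

lemma exists_geodesic (x y : X.V) :
    ∃ z : ℕ → X.V, z 0 = x ∧
      ∀ j, j ≤ X.d x y → ∀ i, i ≤ j → X.d (z i) (z j) = j - i ∧ X.Btw (z i) (z j) y := by
  classical
  let z : ℕ → X.V := fun n => Nat.rec x
    (fun _ p => if h : 1 ≤ X.d p y then (X.exists_step p y h).choose else p) n
  have hz0 : z 0 = x := rfl
  have hzs : ∀ n, z (n + 1) =
      if h : 1 ≤ X.d (z n) y then (X.exists_step (z n) y h).choose else z n := fun n => rfl
  refine ⟨z, hz0, ?_⟩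
  intro j
  induction j with
  | zero =>
    intro _ i hi
    have : i = 0 := Nat.le_zero.mp hi
    subst this
    exact ⟨by rw [X.d_self], X.btw_self _ _⟩
  | succ j IHj =>
    intro hj i hi
    have hj' : j ≤ X.d x y := by omega
    have hxzj : X.d x (z j) = j := by
      have := (IHj hj' 0 (Nat.zero_le _)).1
      rw [hz0] at this
      omega
    have hbxzj : X.Btw x (z j) y := by
      have := (IHj hj' 0 (Nat.zero_le _)).2
      rwa [hz0] at this
    have hdzy : 1 ≤ X.d (z j) y := by
      have h' : X.d x (z j) + X.d (z j) y = X.d x y := hbxzj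
      omega
    have hstep := (X.exists_step (z j) y hdzy).choose_spec
    have hzj1 : z (j + 1) = (X.exists_step (z j) y hdzy).choose := by
      rw [hzs j, dif_pos hdzy]
    have hd1 : X.d (z j) (z (j + 1)) = 1 := by rw [hzj1]; exact hstep.1
    have hb1 : X.Btw (z j) (z (j + 1)) y := by rw [hzj1]; exact hstep.2
    rcases Nat.eq_or_lt_of_le hi with heq | hlt
    · subst heq
      exact ⟨by rw [X.d_self]; omega, X.btw_self _ _⟩
    · have hij : i ≤ j := by omega
      obtain ⟨hdij, hbij⟩ := IHj hj' i hij
      obtain ⟨hcat1, hcat2⟩ := X.btw_concat hbij hb1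
      refine ⟨?_, hcat2⟩
      have h' : X.d (z i) (z j) + X.d (z j) (z (j + 1)) = X.d (z i) (z (j + 1)) := hcat1
      omega
end CubeComplex

/-- A convex subcomplex of a CAT(0) cube complex, together with its gate
(closest-point projection) map, characterized by the property that a
hyperplane separates `x` from `gate x` iff it separates `x` from the
subcomplex. -/
structure ConvexSub (X : CubeComplex) where
  carrier : Set X.V
  nonempty : carrier.Nonempty
  convex : X.IsConvex carrier
  gate : X.V → X.V
  gate_mem : ∀ x, gate x ∈ carrier
  gate_idem : ∀ x ∈ carrier, gate x = x
  gate_sep : ∀ x w, X.Sep w x (gate x) ↔ X.SepFrom w x carrier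

/-- `K` is contained in a combinatorial hyperplane: there is a hyperplane `w`
not crossing `K` such that every point of `K` is the endpoint of a `1`--cube
dual to `w` (i.e. `K` lies in one of the two copies of `w` bounding its
carrier). -/
def CubeComplex.ContainedInCombHyp (X : CubeComplex) (K : Set X.V) : Prop :=
  ∃ w : X.Wall, (∀ x ∈ K, ∃ y, X.d x y = 1 ∧ X.Sep w x y) ∧
    ∀ a ∈ K, ∀ b ∈ K, ¬ X.Sep w a b


lemma CubeComplex.sep_const_aux (X : CubeComplex) (F F' : ConvexSub X) {w : X.Wall}
    (hW : ∀ u ∈ F.carrier, ∀ v ∈ F'.carrier, X.Sep w u v)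
    {a b : X.V} (ha : a ∈ F.carrier) (hb : b ∈ F.carrier) :
    X.side w a ↔ X.side w b := by
  obtain ⟨f', hf'⟩ := F'.nonempty
  exact iff_of_not_iff_of_not_iff' (hW a ha f' hf') (hW b hb f' hf')

lemma CubeComplex.gate_sep_char (X : CubeComplex) (F F' : ConvexSub X)
    (hpar : X.ParallelSet F.carrier F'.carrier) {f : X.V} (hf : f ∈ F.carrier) (w : X.Wall) :
    X.Sep w f (F'.gate f) ↔ ∀ u ∈ F.carrier, ∀ v ∈ F'.carrier, X.Sep w u v := by
  rw [F'.gate_sep]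
  constructor
  · intro hsf
    have hnc' : ¬ X.Crosses w F'.carrier := by
      rintro ⟨u, hu, v, hv, huv⟩
      exact huv (iff_of_not_iff_of_not_iff (hsf u hu) (hsf v hv))
    have hnc : ¬ X.Crosses w F.carrier := fun h => hnc' ((hpar w).mp h)
    intro u hu v hv
    have h1 : X.side w f ↔ X.side w u := by
      by_contra hc
      exact hnc ⟨f, hf, u, hu, hc⟩
    exact fun hc => (hsf v hv) (h1.trans hc)
  · intro h k hk
    exact h f hf k hk

lemma CubeComplex.mem_of_d_zero (X : CubeComplex) {K : Set X.V} (hK : X.IsConvex K)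
    {x y : X.V} (hy : y ∈ K) (h : X.d y x = 0) : x ∈ K := by
  apply hK y hy y hy x
  show X.d y x + X.d x y = X.d y y
  rw [h, X.d_comm x y, h, X.d_self]

theorem CubeComplex.main_aux (X : CubeComplex) (F F' : ConvexSub X)
    (hpar : X.ParallelSet F.carrier F'.carrier) (hne : F.carrier ≠ F'.carrier) :
    (∃ a : ℕ, 1 ≤ a ∧ ∃ ι : F.carrier × Fin (a + 1) → X.V,
        (∀ p q : F.carrier × Fin (a + 1),
          X.d (ι p) (ι q) =
            X.d (p.1 : X.V) (q.1 : X.V) +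
              (max (p.2 : ℕ) (q.2 : ℕ) - min (p.2 : ℕ) (q.2 : ℕ))) ∧
        (∀ f : F.carrier, ι (f, 0) = (f : X.V))) ∧
      X.ContainedInCombHyp F.carrier := by
  classical
  obtain ⟨f0, hf0⟩ := F.nonempty
  have hchar : ∀ f ∈ F.carrier, ∀ w : X.Wall,
      X.Sep w f (F'.gate f) ↔ ∀ u ∈ F.carrier, ∀ v ∈ F'.carrier, X.Sep w u v :=
    fun f hf w => X.gate_sep_char F F' hpar hf w
  set a := X.d f0 (F'.gate f0) with ha_def
  have hWne : ∃ w : X.Wall, ∀ u ∈ F.carrier, ∀ v ∈ F'.carrier, X.Sep w u v := by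
    rcases Classical.em (∃ x, x ∈ F.carrier ∧ x ∉ F'.carrier) with ⟨x, hx, hx'⟩ | hxx
    · have hd : X.d x (F'.gate x) ≠ 0 := by
        intro h
        exact hx' (X.mem_of_d_zero F'.convex (F'.gate_mem x) (by rw [X.d_comm]; exact h))
      obtain ⟨w, hw⟩ := (X.d_pos_iff x (F'.gate x)).mp (by omega)
      exact ⟨w, (hchar x hx w).mp hw⟩
    · have hsub : F.carrier ⊆ F'.carrier := by
        intro t ht
        by_contra hc
        exact hxx ⟨t, ht, hc⟩
      have hx' : ∃ x, x ∈ F'.carrier ∧ x ∉ F.carrier := by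
        by_contra hc
        push_neg at hc
        exact hne (Set.Subset.antisymm hsub hc)
      obtain ⟨x, hx, hxn⟩ := hx'
      have hpar' : X.ParallelSet F'.carrier F.carrier := fun w => (hpar w).symm
      have hd : X.d x (F.gate x) ≠ 0 := fun h =>
        hxn (X.mem_of_d_zero F.convex (F.gate_mem x) (by rw [X.d_comm]; exact h))
      obtain ⟨w, hw⟩ := (X.d_pos_iff x (F.gate x)).mp (by omega)
      have hw' := (X.gate_sep_char F' F hpar' hx w).mp hw
      exact ⟨w, fun u hu v hv => fun hiff => hw' v hv u hu hiff.symm⟩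
  have ha1 : 1 ≤ a := by
    obtain ⟨w, hw⟩ := hWne
    rw [ha_def]
    exact (X.d_pos_iff _ _).mpr ⟨w, (hchar f0 hf0 w).mpr hw⟩
  obtain ⟨z, hz0, hzgeo⟩ := X.exists_geodesic f0 (F'.gate f0)
  rw [← ha_def] at hzgeo
  set ι : F.carrier × Fin (a + 1) → X.V := fun p =>
    if (p.2 : ℕ) = 0 then (p.1 : X.V)
    else X.median (p.1 : X.V) (z (p.2 : ℕ)) (F'.gate (p.1 : X.V)) with hι
  have hι0 : ∀ f : F.carrier, ι (f, 0) = (f : X.V) := by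
    intro f
    rw [hι]
    simp
  have hside : ∀ (f : F.carrier) (i : Fin (a + 1)) (w : X.Wall),
      ((∀ u ∈ F.carrier, ∀ v ∈ F'.carrier, X.Sep w u v) →
        (X.side w (ι (f, i)) ↔ X.side w (z (i : ℕ)))) ∧
      (¬ (∀ u ∈ F.carrier, ∀ v ∈ F'.carrier, X.Sep w u v) →
        (X.side w (ι (f, i)) ↔ X.side w (f : X.V))) := by
    intro f i w
    rcases Classical.em ((i : ℕ) = 0) with h0 | h0
    · have hfi : ι (f, i) = (f : X.V) := by rw [hι]; simp [h0]
      rw [hfi]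
      constructor
      · intro hw
        rw [h0, hz0]
        exact X.sep_const_aux F F' hw f.2 hf0
      · intro _
        exact Iff.rfl
    · have hfi : ι (f, i) = X.median (f : X.V) (z (i : ℕ)) (F'.gate (f : X.V)) := by
        rw [hι]; simp [h0]
      rw [hfi]
      obtain ⟨m1, m2, m3⟩ := X.median_side (f : X.V) (z (i : ℕ)) (F'.gate (f : X.V)) w
      constructor
      · intro hw
        have hsep : ¬ (X.side w (f : X.V) ↔ X.side w (F'.gate (f : X.V))) :=
          (hchar f f.2 w).mpr hw
        rcases Classical.em (X.side w (f : X.V) ↔ X.side w (z (i : ℕ))) with hz1 | hz1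
        · exact (m1 hz1).trans hz1
        · exact m2 (iff_of_not_iff_of_not_iff hz1 hsep)
      · intro hw
        have hns : X.side w (f : X.V) ↔ X.side w (F'.gate (f : X.V)) := by
          by_contra hc
          exact hw ((hchar f f.2 w).mp hc)
        exact m3 hns
  have hzW : ∀ j, j ≤ a → ∀ i, i ≤ j → ∀ w, X.Sep w (z i) (z j) →
      ∀ u ∈ F.carrier, ∀ v ∈ F'.carrier, X.Sep w u v := by
    intro j hj i hij w hw
    have h1 := (hzgeo j hj i hij).2
    have h2 := (hzgeo i (le_trans hij hj) 0 (Nat.zero_le _)).2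
    rw [hz0] at h2
    have hw1 : w ∈ X.sepSet (z i) (F'.gate f0) := X.btw_sub_left h1 hw
    have hw2 : w ∈ X.sepSet f0 (F'.gate f0) := X.btw_sub_right h2 hw1
    exact (hchar f0 hf0 w).mp hw2
  have hmain : ∀ (f g : F.carrier) (i j : Fin (a + 1)), (i : ℕ) ≤ (j : ℕ) →
      X.d (ι (f, i)) (ι (g, j)) = X.d (f : X.V) (g : X.V) + ((j : ℕ) - (i : ℕ)) := by
    intro f g i j hij
    have hja : (j : ℕ) ≤ a := Nat.lt_succ_iff.mp j.isLt
    have hSeq : X.sepSet (ι (f, i)) (ι (g, j)) =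
        X.sepSet (f : X.V) (g : X.V) ∪ X.sepSet (z (i : ℕ)) (z (j : ℕ)) := by
      ext w
      obtain ⟨hf1, hf2⟩ := hside f i w
      obtain ⟨hg1, hg2⟩ := hside g j w
      simp only [sepSet, Sep, Set.mem_setOf_eq, Set.mem_union]
      rcases Classical.em (∀ u ∈ F.carrier, ∀ v ∈ F'.carrier, X.Sep w u v) with hw | hw
      · have e1 := hf1 hw
        have e2 := hg1 hw
        have hfg : X.side w (f : X.V) ↔ X.side w (g : X.V) :=
          X.sep_const_aux F F' hw f.2 g.2
        constructor
        · intro h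
          right
          exact fun hc => h ((e1.trans hc).trans e2.symm)
        · rintro (h | h)
          · exact absurd hfg h
          · exact fun hc => h ((e1.symm.trans hc).trans e2)
      · have e1 := hf2 hw
        have e2 := hg2 hw
        have hzij : X.side w (z (i : ℕ)) ↔ X.side w (z (j : ℕ)) := by
          by_contra hc
          exact hw (hzW (j : ℕ) hja (i : ℕ) hij w hc)
        constructor
        · intro h
          left
          exact fun hc => h ((e1.trans hc).trans e2.symm)
        · rintro (h | h)
          · exact fun hc => h ((e1.symm.trans hc).trans e2)
          · exact absurd hzij h
    have hdisj : Disjoint (X.sepSet (f : X.V) (g : X.V))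
        (X.sepSet (z (i : ℕ)) (z (j : ℕ))) := by
      rw [Set.disjoint_left]
      intro w hwf hwz
      exact hwf (X.sep_const_aux F F' (hzW (j : ℕ) hja (i : ℕ) hij w hwz) f.2 g.2)
    rw [d_eq', hSeq,
      Set.ncard_union_eq hdisj (X.sepSet_finite _ _) (X.sepSet_finite _ _),
      ← d_eq', ← d_eq', (hzgeo (j : ℕ) hja (i : ℕ) hij).1]
  refine ⟨⟨a, ha1, ι, ?_, hι0⟩, ?_⟩
  · intro p q
    rcases le_total (p.2 : ℕ) (q.2 : ℕ) with h | h
    · rw [Nat.max_eq_right h, Nat.min_eq_left h]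
      exact hmain p.1 q.1 p.2 q.2 h
    · rw [Nat.max_eq_left h, Nat.min_eq_right h,
        X.d_comm (ι p) (ι q), X.d_comm (p.1 : X.V) (q.1 : X.V)]
      exact hmain q.1 p.1 q.2 p.2 h
  · have hd01 : X.d (z 0) (z 1) = 1 := by
      have := (hzgeo 1 ha1 0 (Nat.zero_le _)).1
      simpa using this
    obtain ⟨w0, hw0⟩ := (X.d_pos_iff (z 0) (z 1)).mp (by simp [hd01])
    have hw0W := hzW 1 ha1 0 (Nat.zero_le _) w0 hw0
    refine ⟨w0, ?_, ?_⟩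
    · intro x hx
      have hx1a : (1 : ℕ) < a + 1 := by omega
      refine ⟨ι (⟨x, hx⟩, ⟨1, hx1a⟩), ?_, ?_⟩
      · have hm := hmain ⟨x, hx⟩ ⟨x, hx⟩ 0 ⟨1, hx1a⟩ (by simp)
        rw [hι0 ⟨x, hx⟩, X.d_self] at hm
        simpa using hm
      · have e := (hside ⟨x, hx⟩ ⟨1, hx1a⟩ w0).1 hw0W
        have hx0 : X.side w0 x ↔ X.side w0 (z 0) := by
          rw [hz0]
          exact X.sep_const_aux F F' hw0W hx hf0
        intro hiff
        exact hw0 (hx0.symm.trans (hiff.trans e))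
    · intro u hu v hv hsep
      exact hsep (X.sep_const_aux F F' hw0W hu hv)


/-- If a convex subcomplex `F` is parallel to some convex
subcomplex `F' ≠ F`, then there is a cubical (`ℓ¹`-) isometric embedding
`F × [0,a] → X` with `a ≥ 1` restricting to the inclusion on `F × {0}`;
in particular `F` is contained in a combinatorial hyperplane.  Hence every
convex subcomplex is either unique in its parallelism class or contained in a
combinatorial hyperplane. -/
theorem parallel_copy_product_embedding (X : CubeComplex) (F F' : ConvexSub X) :
    ((X.ParallelSet F.carrier F'.carrier ∧ F.carrier ≠ F'.carrier) →
      (∃ a : ℕ, 1 ≤ a ∧ ∃ ι : F.carrier × Fin (a + 1) → X.V,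
        (∀ p q : F.carrier × Fin (a + 1),
          X.d (ι p) (ι q) =
            X.d (p.1 : X.V) (q.1 : X.V) +
              (max (p.2 : ℕ) (q.2 : ℕ) - min (p.2 : ℕ) (q.2 : ℕ))) ∧
        (∀ f : F.carrier, ι (f, 0) = (f : X.V))) ∧
      X.ContainedInCombHyp F.carrier) ∧
    (∀ G : ConvexSub X,
      (∀ G' : ConvexSub X, X.ParallelSet G.carrier G'.carrier →
        G.carrier = G'.carrier) ∨
      X.ContainedInCombHyp G.carrier) := by
  constructor
  · rintro ⟨hpar, hne⟩
    exact X.main_aux F F' hpar hne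
  · intro G
    rcases Classical.em (∀ G' : ConvexSub X, X.ParallelSet G.carrier G'.carrier →
        G.carrier = G'.carrier) with h | h
    · exact Or.inl h
    · push_neg at h
      obtain ⟨G', h1, h2⟩ := h
      exact Or.inr (X.main_aux G G' h1 h2).2
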